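/- In an inverse semigroup S with zero, define λ_s : ℓ²(S \ {0}) → ℓ²(S \ {0}) on basis vectors by λ_s(δ_x) = δ_{sx} if s⁻¹s ≥ xx⁻¹ (i.e., s⁻¹s · xx⁻¹ = xx⁻¹), and λ_s(δ_x) = 0 otherwise. Then each λ_s is a well-defined partial isometry with λ_s* = λ_{s⁻¹}, and λ : S → B(ℓ²(S \ {0})) is multiplicative: λ_s λ_t = λ_{st} for all s, t ∈ S. -/

import Mathlib

/-- An inverse semigroup with zero. -/
structure InvSemigroupZero (S : Type*) [Semigroup S] where
  zero : S
  inv : S → S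
  zero_mul : ∀ s, zero * s = zero
  mul_zero : ∀ s, s * zero = zero
  inv_spec₁ : ∀ s, s * inv s * s = s
  inv_spec₂ : ∀ s, inv s * s * inv s = inv s
  inv_unique : ∀ s t, s * t * s = s → t * s * t = t → t = inv s

/-!
Left multiplication by `s` is a partial bijection of `S \ {0}`: it maps
`{x | x x⁻¹ ≤ s⁻¹ s} = {x | s⁻¹ s x = x}` onto `{y | s s⁻¹ y = y}`, with inverse left
multiplication by `s⁻¹`. Since idempotents of an inverse semigroup commute, `(st)⁻¹ = t⁻¹ s⁻¹`,
and the domain of `st` consists of those `x` in the domain of `t` with `t x` in the domain of `s`;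
so these partial bijections compose like the semigroup. Every partial bijection `e` of index sets
induces a contraction `δ_a ↦ δ_{e a}` of `ℓ²`, functorially, with adjoint induced by `e⁻¹`.
Thus `λ_s` is the operator induced by left multiplication by `s`, and
`λ_s λ_s* λ_s = λ_{s s⁻¹ s} = λ_s`.
-/

namespace PEquiv

variable {α β : Type*}

section Reindex

variable {M : Type*} [AddCommMonoid M] [TopologicalSpace M]

/-- Both sides are reindexings of the sum of `F a b` over the graph of `e`. -/
theorem hasSum_elim_symm_iff (e : α ≃. β) (F : α → β → M) {m : M} :
    HasSum (fun b => (e.symm b).elim 0 (F · b)) m ↔ HasSum (fun a => (e a).elim 0 (F a)) m := by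
  let graph := {p : α × β // e p.1 = some p.2}
  have hfst : Function.Injective fun p : graph => p.1.1 := by
    rintro ⟨⟨a, b⟩, hab⟩ ⟨⟨a', b'⟩, hab'⟩ (rfl : a = a')
    obtain rfl : b = b' := Option.some_inj.1 (hab.symm.trans hab')
    rfl
  have hsnd : Function.Injective fun p : graph => p.1.2 := by
    rintro ⟨⟨a, b⟩, hab⟩ ⟨⟨a', b'⟩, hab'⟩ (rfl : b = b')
    rw [← e.eq_some_iff] at hab hab'
    obtain rfl : a = a' := Option.some_inj.1 (hab.symm.trans hab')
    rfl
  have hcomp : (fun b => (e.symm b).elim 0 (F · b)) ∘ (fun p : graph => p.1.2) =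
      (fun a => (e a).elim 0 (F a)) ∘ (fun p : graph => p.1.1) := by
    funext ⟨⟨a, b⟩, hab⟩
    simp [hab, e.eq_some_iff.2 hab]
  rw [← hsnd.hasSum_iff, hcomp, hfst.hasSum_iff]
  · intro a ha
    cases hb : e a with
    | none => rfl
    | some b => exact absurd ⟨⟨⟨a, b⟩, hb⟩, rfl⟩ ha
  · intro b hb
    cases ha : e.symm b with
    | none => rfl
    | some a => exact absurd ⟨⟨⟨a, b⟩, e.eq_some_iff.1 ha⟩, rfl⟩ hb

theorem summable_elim_symm_iff (e : α ≃. β) (F : α → β → M) :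
    Summable (fun b => (e.symm b).elim 0 (F · b)) ↔ Summable (fun a => (e a).elim 0 (F a)) :=
  exists_congr fun _ => e.hasSum_elim_symm_iff F

theorem tsum_elim_symm [T2Space M] (e : α ≃. β) (F : α → β → M) :
    ∑' b, (e.symm b).elim 0 (F · b) = ∑' a, (e a).elim 0 (F a) :=
  tsum_eq_tsum_of_hasSum_iff_hasSum (e.hasSum_elim_symm_iff F)

end Reindex

theorem _root_.Option.elim_zero_const_mem_Icc (o : Option β) {x : ℝ} (hx : 0 ≤ x) :
    o.elim 0 (fun _ => x) ∈ Set.Icc 0 x := by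
  cases o <;> simp [hx]

theorem summable_elim_symm {g : α → ℝ} (e : α ≃. β) (hg₀ : ∀ a, 0 ≤ g a) (hg : Summable g) :
    Summable (fun b => (e.symm b).elim 0 g) :=
  (e.summable_elim_symm_iff fun a _ => g a).2 <| .of_nonneg_of_le
    (fun a => ((e a).elim_zero_const_mem_Icc (hg₀ a)).1)
    (fun a => ((e a).elim_zero_const_mem_Icc (hg₀ a)).2) hg

theorem tsum_elim_symm_le {g : α → ℝ} (e : α ≃. β) (hg₀ : ∀ a, 0 ≤ g a) (hg : Summable g) :
    ∑' b, (e.symm b).elim 0 g ≤ ∑' a, g a := by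
  rw [e.tsum_elim_symm fun a _ => g a]
  exact ((e.summable_elim_symm_iff fun a _ => g a).1 (e.summable_elim_symm hg₀ hg)).tsum_le_tsum
    (fun a => ((e a).elim_zero_const_mem_Icc (hg₀ a)).2) hg

section Operator

open scoped ENNReal

variable {𝕜 E : Type*} [NormedField 𝕜] [NormedAddCommGroup E] [NormedSpace 𝕜 E]

theorem norm_rpow_elim_symm (e : α ≃. β) (f : α → E) (b : β) :
    ‖(e.symm b).elim 0 f‖ ^ (2 : ℝ≥0∞).toReal = (e.symm b).elim 0 (‖f ·‖ ^ (2 : ℝ≥0∞).toReal) := by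
  cases e.symm b <;> simp

theorem memℓp_elim_symm (e : α ≃. β) (f : lp (fun _ : α => E) 2) :
    Memℓp (fun b => (e.symm b).elim 0 f) 2 := by
  refine memℓp_gen ?_
  simp only [norm_rpow_elim_symm]
  exact e.summable_elim_symm (fun _ => by positivity) ((lp.memℓp f).summable (by norm_num))

noncomputable def toL2ₗ (e : α ≃. β) : lp (fun _ : α => E) 2 →ₗ[𝕜] lp (fun _ : β => E) 2 where
  toFun f := ⟨fun b => (e.symm b).elim 0 f, e.memℓp_elim_symm f⟩
  map_add' f g := lp.ext <| funext fun b => by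
    change (e.symm b).elim 0 ⇑(f + g) = (e.symm b).elim 0 f + (e.symm b).elim 0 g
    cases e.symm b <;> simp [Option.elim]
  map_smul' c f := lp.ext <| funext fun b => by
    change (e.symm b).elim 0 ⇑(c • f) = c • (e.symm b).elim 0 f
    cases e.symm b <;> simp [Option.elim]

theorem norm_toL2ₗ_le (e : α ≃. β) (f : lp (fun _ : α => E) 2) : ‖e.toL2ₗ (𝕜 := 𝕜) f‖ ≤ ‖f‖ := by
  refine lp.norm_le_of_tsum_le (by norm_num) (norm_nonneg f) ?_
  rw [lp.norm_rpow_eq_tsum (by norm_num)]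
  simp only [toL2ₗ, LinearMap.coe_mk, AddHom.coe_mk, norm_rpow_elim_symm]
  exact e.tsum_elim_symm_le (fun _ => by positivity) ((lp.memℓp f).summable (by norm_num))

noncomputable def toL2 (e : α ≃. β) : lp (fun _ : α => E) 2 →L[𝕜] lp (fun _ : β => E) 2 :=
  e.toL2ₗ.mkContinuous 1 fun f => by simpa using e.norm_toL2ₗ_le f

theorem toL2_apply (e : α ≃. β) (f : lp (fun _ : α => E) 2) (b : β) :
    e.toL2 (𝕜 := 𝕜) f b = (e.symm b).elim 0 f :=
  rfl

theorem toL2_single_of_eq_some [DecidableEq α] [DecidableEq β] (e : α ≃. β) {a : α} {b : β}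
    (h : e a = some b) (c : E) : e.toL2 (𝕜 := 𝕜) (lp.single 2 a c) = lp.single 2 b c := by
  ext b'
  simp only [toL2_apply, lp.coeFn_single]
  by_cases hb : b' = b
  · subst hb
    simp [e.eq_some_iff.2 h]
  · rw [Pi.single_eq_of_ne hb]
    cases ha : e.symm b' with
    | none => rfl
    | some a' =>
      have ha' : a' ≠ a := by
        rintro rfl
        exact hb (Option.some_inj.1 ((e.eq_some_iff.1 ha).symm.trans h))
      simp [ha']

theorem toL2_single_of_eq_none [DecidableEq α] (e : α ≃. β) {a : α} (h : e a = none) (c : E) :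
    e.toL2 (𝕜 := 𝕜) (lp.single 2 a c) = 0 := by
  ext b
  simp only [toL2_apply, lp.coeFn_single]
  cases ha : e.symm b with
  | none => rfl
  | some a' =>
    have ha' : a' ≠ a := by
      rintro rfl
      simp [e.eq_some_iff.1 ha] at h
    simp [ha']

theorem toL2_trans {γ : Type*} (e : α ≃. β) (e' : β ≃. γ) :
    (e.trans e').toL2 (𝕜 := 𝕜) (E := E) = e'.toL2 ∘L e.toL2 := by
  ext f c
  change ((e'.symm c).bind e.symm).elim 0 f = (e'.symm c).elim 0 (e.toL2 f)
  cases e'.symm c <;> rfl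

end Operator

section Adjoint

variable {𝕜 E : Type*} [RCLike 𝕜] [NormedAddCommGroup E] [InnerProductSpace 𝕜 E] [CompleteSpace E]

theorem adjoint_toL2 (e : α ≃. β) :
    ContinuousLinearMap.adjoint (e.toL2 (𝕜 := 𝕜) (E := E)) = e.symm.toL2 := by
  refine ((ContinuousLinearMap.eq_adjoint_iff _ _).2 fun g f => ?_).symm
  simp only [lp.inner_eq_tsum, toL2_apply, symm_symm]
  have hl : ∀ a, inner 𝕜 ((e a).elim 0 g) (f a) = (e a).elim 0 (fun b => inner 𝕜 (g b) (f a)) :=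
    fun a => by cases e a <;> simp
  have hr : ∀ b, inner 𝕜 (g b) ((e.symm b).elim 0 f) =
      (e.symm b).elim 0 (fun a => inner 𝕜 (g b) (f a)) :=
    fun b => by cases e.symm b <;> simp
  simp only [hl, hr]
  exact (e.tsum_elim_symm _).symm

end Adjoint

end PEquiv

namespace InvSemigroupZero

variable {S : Type*} [Semigroup S] (I : InvSemigroupZero S)

theorem mul_inv_mul_mul (s y : S) : s * (I.inv s * (s * y)) = s * y := by
  rw [← mul_assoc, ← mul_assoc, I.inv_spec₁]

theorem inv_mul_mul_inv_mul (s y : S) : I.inv s * (s * (I.inv s * y)) = I.inv s * y := by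
  rw [← mul_assoc, ← mul_assoc, I.inv_spec₂]

theorem inv_inv (s : S) : I.inv (I.inv s) = s :=
  (I.inv_unique _ _ (I.inv_spec₂ s) (I.inv_spec₁ s)).symm

theorem inv_eq_self_of_isIdempotentElem {e : S} (he : IsIdempotentElem e) : I.inv e = e :=
  (I.inv_unique e e (by rw [he.eq, he.eq]) (by rw [he.eq, he.eq])).symm

theorem isIdempotentElem_mul_inv (s : S) : IsIdempotentElem (s * I.inv s) := by
  rw [IsIdempotentElem, ← mul_assoc, I.inv_spec₁]

theorem isIdempotentElem_inv_mul (s : S) : IsIdempotentElem (I.inv s * s) := by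
  rw [IsIdempotentElem, ← mul_assoc, I.inv_spec₂]

include I in
theorem isIdempotentElem_mul {e f : S} (he : IsIdempotentElem e) (hf : IsIdempotentElem f) :
    IsIdempotentElem (e * f) := by
  set x := I.inv (e * f)
  have h₁ : e * f * x * (e * f) = e * f := I.inv_spec₁ _
  have h₂ : x * (e * f) * x = x := I.inv_spec₂ _
  -- `f x e` is another inverse of `e f`
  have hx : f * x * e = x := by
    refine I.inv_unique _ _ ?_ ?_
    · calc e * f * (f * x * e) * (e * f) = e * (f * f) * x * (e * e) * f := by
            simp only [mul_assoc]
        _ = e * f * x * (e * f) := by rw [he.eq, hf.eq]; simp only [mul_assoc]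
        _ = e * f := h₁
    · calc f * x * e * (e * f) * (f * x * e) = f * (x * (e * e) * (f * f) * x) * e := by
            simp only [mul_assoc]
        _ = f * x * e := by rw [he.eq, hf.eq, mul_assoc x e f, h₂]
  have hxx : IsIdempotentElem x :=
    calc x * x = f * x * e * (f * x * e) := by rw [hx]
      _ = f * (x * (e * f) * x) * e := by simp only [mul_assoc]
      _ = x := by rw [h₂, hx]
  rw [(I.inv_unique x (e * f) h₂ h₁).trans (I.inv_eq_self_of_isIdempotentElem hxx)]
  exact hxx

include I in
theorem commute_of_isIdempotentElem {e f : S} (he : IsIdempotentElem e)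
    (hf : IsIdempotentElem f) : Commute e f := by
  have hef := I.isIdempotentElem_mul he hf
  have hfe := I.isIdempotentElem_mul hf he
  refine ((I.inv_unique (e * f) (f * e) ?_ ?_).trans (I.inv_eq_self_of_isIdempotentElem hef)).symm
  · calc e * f * (f * e) * (e * f) = e * (f * f) * (e * e) * f := by simp only [mul_assoc]
      _ = e * f * (e * f) := by rw [he.eq, hf.eq]; simp only [mul_assoc]
      _ = e * f := hef.eq
  · calc f * e * (e * f) * (f * e) = f * (e * e) * (f * f) * e := by simp only [mul_assoc]
      _ = f * e * (f * e) := by rw [he.eq, hf.eq]; simp only [mul_assoc]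
      _ = f * e := hfe.eq

theorem inv_mul_rev (s t : S) : I.inv (s * t) = I.inv t * I.inv s := by
  have hc := (I.commute_of_isIdempotentElem (I.isIdempotentElem_mul_inv t)
    (I.isIdempotentElem_inv_mul s)).eq
  refine (I.inv_unique _ _ ?_ ?_).symm
  · calc s * t * (I.inv t * I.inv s) * (s * t)
          = s * (t * I.inv t * (I.inv s * s)) * t := by simp only [mul_assoc]
      _ = s * I.inv s * s * (t * I.inv t * t) := by rw [hc]; simp only [mul_assoc]
      _ = s * t := by rw [I.inv_spec₁, I.inv_spec₁]
  · calc I.inv t * I.inv s * (s * t) * (I.inv t * I.inv s)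
          = I.inv t * (I.inv s * s * (t * I.inv t)) * I.inv s := by simp only [mul_assoc]
      _ = I.inv t * t * I.inv t * (I.inv s * s * I.inv s) := by rw [← hc]; simp only [mul_assoc]
      _ = I.inv t * I.inv s := by rw [I.inv_spec₂, I.inv_spec₂]

/-- The paper's domain condition `x x⁻¹ ≤ s⁻¹ s` says that `s⁻¹ s` fixes `x`. -/
theorem mul_inv_mul_eq_iff (s x : S) :
    x * I.inv x * (I.inv s * s) = x * I.inv x ↔ I.inv s * (s * x) = x := by
  have hc := (I.commute_of_isIdempotentElem (I.isIdempotentElem_mul_inv x)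
    (I.isIdempotentElem_inv_mul s)).eq
  constructor
  · intro h
    calc I.inv s * (s * x) = I.inv s * s * (x * I.inv x) * x := by
          rw [mul_assoc _ _ x, I.inv_spec₁, mul_assoc]
      _ = x := by rw [← hc, h, I.inv_spec₁]
  · intro h
    calc x * I.inv x * (I.inv s * s) = I.inv s * (s * x) * I.inv x := by
          rw [hc]; simp only [mul_assoc]
      _ = x * I.inv x := by rw [h]

theorem inv_mul_mul_mul_eq_iff (s t x : S) :
    I.inv (s * t) * (s * t * x) = x ↔
      I.inv t * (t * x) = x ∧ I.inv s * (s * (t * x)) = t * x := by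
  have hc := (I.commute_of_isIdempotentElem (I.isIdempotentElem_mul_inv t)
    (I.isIdempotentElem_inv_mul s)).eq
  rw [I.inv_mul_rev]
  constructor
  · intro h
    constructor
    · calc I.inv t * (t * x) = I.inv t * (t * (I.inv t * I.inv s * (s * t * x))) := by rw [h]
        _ = I.inv t * t * I.inv t * I.inv s * (s * t * x) := by simp only [mul_assoc]
        _ = x := by rw [I.inv_spec₂, h]
    · calc I.inv s * (s * (t * x)) = I.inv s * s * (t * I.inv t) * t * x := by
            rw [mul_assoc _ _ t, I.inv_spec₁]; simp only [mul_assoc]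
        _ = t * (I.inv t * I.inv s * (s * t * x)) := by rw [← hc]; simp only [mul_assoc]
        _ = t * x := by rw [h]
  · rintro ⟨h₁, h₂⟩
    calc I.inv t * I.inv s * (s * t * x) = I.inv t * (I.inv s * (s * (t * x))) := by
          simp only [mul_assoc]
      _ = x := by rw [h₂, h₁]

theorem mul_ne_zero_of_inv_mul_mul_eq {s x : S} (h : I.inv s * (s * x) = x) (hx : x ≠ I.zero) :
    s * x ≠ I.zero :=
  fun h₀ => hx (by rw [← h, h₀, I.mul_zero])

variable [DecidableEq S]

def leftMulPart (s : S) (x : {x : S // x ≠ I.zero}) : Option {x : S // x ≠ I.zero} :=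
  if h : I.inv s * (s * x) = x then some ⟨s * x, I.mul_ne_zero_of_inv_mul_mul_eq h x.2⟩ else none

theorem leftMulPart_eq_some_iff {s : S} {x y : {x : S // x ≠ I.zero}} :
    I.leftMulPart s x = some y ↔ I.inv s * (s * x) = x ∧ s * x = y := by
  unfold leftMulPart
  split_ifs with h <;> simp [h, Subtype.ext_iff]

def leftMulPEquiv (s : S) : {x : S // x ≠ I.zero} ≃. {x : S // x ≠ I.zero} where
  toFun := I.leftMulPart s
  invFun := I.leftMulPart (I.inv s)
  inv x y := by
    rw [leftMulPart_eq_some_iff, leftMulPart_eq_some_iff, inv_inv]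
    constructor
    · rintro ⟨h, hx⟩
      rw [← hx]
      exact ⟨I.inv_mul_mul_inv_mul s y, h⟩
    · rintro ⟨h, hy⟩
      rw [← hy]
      exact ⟨I.mul_inv_mul_mul s x, h⟩

theorem leftMulPEquiv_apply (s : S) (x : {x : S // x ≠ I.zero}) :
    I.leftMulPEquiv s x = I.leftMulPart s x :=
  rfl

theorem symm_leftMulPEquiv (s : S) : (I.leftMulPEquiv s).symm = I.leftMulPEquiv (I.inv s) :=
  PEquiv.ext fun _ => rfl

theorem leftMulPEquiv_mul (s t : S) :
    I.leftMulPEquiv (s * t) = (I.leftMulPEquiv t).trans (I.leftMulPEquiv s) := by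
  refine PEquiv.ext fun x => Option.ext fun y => ?_
  simp only [PEquiv.trans_eq_some, leftMulPEquiv_apply, leftMulPart_eq_some_iff,
    inv_mul_mul_mul_eq_iff]
  constructor
  · rintro ⟨⟨h₁, h₂⟩, hy⟩
    exact ⟨⟨t * x, I.mul_ne_zero_of_inv_mul_mul_eq h₁ x.2⟩, ⟨h₁, rfl⟩, h₂, by rw [← hy, mul_assoc]⟩
  · rintro ⟨z, ⟨h₁, hz⟩, h₂, hy⟩
    rw [← hz] at h₂ hy
    exact ⟨⟨h₁, h₂⟩, by rw [← hy, mul_assoc]⟩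

end InvSemigroupZero

/-- The left regular representation of an inverse semigroup with zero on
`ℓ²(S \ {0})`: there is a family `λ_s` of bounded operators with
`λ_s δ_x = δ_{sx}` if `x x⁻¹ ≤ s⁻¹s` and `λ_s δ_x = 0` otherwise; each `λ_s` is a
partial isometry with `λ_s* = λ_{s⁻¹}`, and `λ` is multiplicative. -/
theorem stmt14 {S : Type*} [Semigroup S] [DecidableEq S] (I : InvSemigroupZero S) :
    ∃ lam : S → (lp (fun _ : {x : S // x ≠ I.zero} => ℂ) 2 →L[ℂ]
        lp (fun _ : {x : S // x ≠ I.zero} => ℂ) 2),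
      (∀ (s : S) (x : {x : S // x ≠ I.zero}),
        (((x : S) * I.inv x) * (I.inv s * s) = (x : S) * I.inv x →
          ∃ hx : s * (x : S) ≠ I.zero,
            lam s (lp.single 2 x 1) = lp.single 2 (⟨s * (x : S), hx⟩ : {x : S // x ≠ I.zero}) 1) ∧
        (¬ ((x : S) * I.inv x) * (I.inv s * s) = (x : S) * I.inv x →
          lam s (lp.single 2 x 1) = 0)) ∧
      (∀ s : S, ContinuousLinearMap.adjoint (lam s) = lam (I.inv s)) ∧
      (∀ s : S, lam s ∘L ContinuousLinearMap.adjoint (lam s) ∘L lam s = lam s) ∧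
      (∀ s t : S, lam s ∘L lam t = lam (s * t)) := by
  let lam := fun s => (I.leftMulPEquiv s).toL2 (𝕜 := ℂ) (E := ℂ)
  have hmul : ∀ s t, lam s ∘L lam t = lam (s * t) := fun s t => by
    simp only [lam, I.leftMulPEquiv_mul, PEquiv.toL2_trans]
  have hadj : ∀ s, ContinuousLinearMap.adjoint (lam s) = lam (I.inv s) := fun s => by
    simp only [lam, PEquiv.adjoint_toL2, I.symm_leftMulPEquiv]
  refine ⟨lam, fun s x => ⟨fun h => ?_, fun h => ?_⟩, hadj, fun s => ?_, hmul⟩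
  · rw [I.mul_inv_mul_eq_iff] at h
    exact ⟨I.mul_ne_zero_of_inv_mul_mul_eq h x.2,
      PEquiv.toL2_single_of_eq_some _ (I.leftMulPart_eq_some_iff.2 ⟨h, rfl⟩) 1⟩
  · rw [I.mul_inv_mul_eq_iff] at h
    exact PEquiv.toL2_single_of_eq_none _ (dif_neg h) 1
  · rw [hadj, hmul, hmul, ← mul_assoc, I.inv_spec₁]
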